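/- Let R_n → ∞ and let Γ_n : [-R_n,R_n] × S¹ → ℝ be harmonic functions with vanishing mean value, uniformly bounded Dirichlet energy ‖dΓ_n‖²_{L²} ≤ B, and zero co-period (∫_0^1 ∂_sΓ_n(s,t) dt = 0 for all s). Then for every ε > 0 there exists h > 0 such that whenever R_n > h one has sup_{[-R_n+h, R_n−h] × S¹} |Γ_n| < ε. -/

import Mathlib

open MeasureTheory intervalIntegral Filter

/-- `Γ` is harmonic at `(s,t)`: `∂_s² Γ + ∂_t² Γ = 0`. -/
def IsHarmonicAt (Γ : ℝ × ℝ → ℝ) (s t : ℝ) : Prop :=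
  deriv (deriv (fun x => Γ (x, t))) s + deriv (deriv (fun y => Γ (s, y))) t = 0

open Set Metric


noncomputable def pd (v : ℝ × ℝ) (F : ℝ × ℝ → ℝ) (p : ℝ × ℝ) : ℝ := fderiv ℝ F p v

lemma pd_smooth (v : ℝ × ℝ) {F : ℝ × ℝ → ℝ} (hF : ContDiff ℝ (⊤ : ℕ∞) F) :
    ContDiff ℝ (⊤ : ℕ∞) (pd v F) :=
  (hF.fderiv_right (mod_cast le_top)).clm_apply contDiff_const

lemma pd_cont (v : ℝ × ℝ) {F : ℝ × ℝ → ℝ} (hF : ContDiff ℝ (⊤ : ℕ∞) F) :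
    Continuous (pd v F) := (pd_smooth v hF).continuous

lemma hasDerivAt_slice1 {F : ℝ × ℝ → ℝ} (hF : ContDiff ℝ (⊤ : ℕ∞) F) (s t : ℝ) :
    HasDerivAt (fun x => F (x, t)) (pd (1,0) F (s,t)) s := by
  have h1 : HasDerivAt (fun x : ℝ => (x, t)) ((1:ℝ),(0:ℝ)) s :=
    (hasDerivAt_id s).prodMk (hasDerivAt_const s t)
  have h3 := (((hF.differentiable (by simp)) (s,t)).hasFDerivAt).comp_hasDerivAt s h1
  simpa [pd, Function.comp_def] using h3

lemma hasDerivAt_slice2 {F : ℝ × ℝ → ℝ} (hF : ContDiff ℝ (⊤ : ℕ∞) F) (s t : ℝ) :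
    HasDerivAt (fun y => F (s, y)) (pd (0,1) F (s,t)) t := by
  have h1 : HasDerivAt (fun y : ℝ => (s, y)) ((0:ℝ),(1:ℝ)) t :=
    (hasDerivAt_const t s).prodMk (hasDerivAt_id t)
  have h3 := (((hF.differentiable (by simp)) (s,t)).hasFDerivAt).comp_hasDerivAt t h1
  simpa [pd, Function.comp_def] using h3

lemma pd_swap {F : ℝ × ℝ → ℝ} (hF : ContDiff ℝ (⊤ : ℕ∞) F) (v w : ℝ × ℝ) (p : ℝ × ℝ) :
    pd v (pd w F) p = pd w (pd v F) p := by
  have hdF : ContDiff ℝ (⊤ : ℕ∞) (fderiv ℝ F) := hF.fderiv_right (mod_cast le_top)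
  have key : ∀ u z : ℝ × ℝ, pd u (pd z F) p = (fderiv ℝ (fderiv ℝ F) p u) z := by
    intro u z
    have h1 : HasFDerivAt (fun q => (fderiv ℝ F q) z)
        ((ContinuousLinearMap.apply ℝ ℝ z).comp (fderiv ℝ (fderiv ℝ F) p)) p :=
      (ContinuousLinearMap.apply ℝ ℝ z).hasFDerivAt.comp p
        ((hdF.differentiable (by simp)) p).hasFDerivAt
    show fderiv ℝ (fun q => (fderiv ℝ F q) z) p u = _
    rw [h1.fderiv]
    rfl
  rw [key v w, key w v]
  exact second_derivative_symmetric (fun y => ((hF.differentiable (by simp)) y).hasFDerivAt)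
    ((hdF.differentiable (by simp)) p).hasFDerivAt v w

lemma pd_periodic {F : ℝ × ℝ → ℝ} (hF : Differentiable ℝ F)
    (hp : ∀ s t, F (s, t + 1) = F (s, t)) (v : ℝ × ℝ) (s t : ℝ) :
    pd v F (s, t + 1) = pd v F (s, t) := by
  have hcomp : (fun p : ℝ × ℝ => F (p + (0,1))) = F := by
    funext p
    have h4 := hp p.1 p.2
    have : p + ((0:ℝ),(1:ℝ)) = (p.1, p.2 + 1) := by
      ext <;> simp
    rw [this, h4]
  have h1 : HasFDerivAt (fun p : ℝ × ℝ => F (p + (0,1)))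
      (fderiv ℝ F ((s,t) + (0,1))) (s,t) :=
    (hF ((s,t) + (0,1))).hasFDerivAt.comp (s,t) ((hasFDerivAt_id (s,t)).add_const (0,1))
  rw [hcomp] at h1
  have : fderiv ℝ F ((s,t)+(0,1)) = fderiv ℝ F (s,t) := h1.fderiv.symm
  simp only [pd]
  rw [← this]
  norm_num

/-- Differentiation under the interval integral for continuous families. -/
lemma param_hasDerivAt (F F' : ℝ × ℝ → ℝ) (hF : Continuous F) (hF' : Continuous F')
    (hd : ∀ x t : ℝ, HasDerivAt (fun x => F (x, t)) (F' (x, t)) x) (s : ℝ) :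
    HasDerivAt (fun x => ∫ t in (0:ℝ)..1, F (x, t)) (∫ t in (0:ℝ)..1, F' (s, t)) s := by
  obtain ⟨C, hC⟩ : ∃ C, ∀ p ∈ Icc (s-1) (s+1) ×ˢ Icc (0:ℝ) 1, ‖F' p‖ ≤ C :=
    ((isCompact_Icc.prod isCompact_Icc).exists_bound_of_continuousOn hF'.continuousOn)
  have key := intervalIntegral.hasDerivAt_integral_of_dominated_loc_of_deriv_le
    (μ := volume) (a := (0:ℝ)) (b := 1) (x₀ := s)
    (F := fun x t => F (x, t)) (F' := fun x t => F' (x, t)) (bound := fun _ => C)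
    (s := Metric.ball s 1) (Metric.ball_mem_nhds s one_pos)
    (Filter.Eventually.of_forall fun x =>
      (hF.comp (continuous_const.prodMk continuous_id)).aestronglyMeasurable)
    ((hF.comp (continuous_const.prodMk continuous_id)).intervalIntegrable 0 1)
    ((hF'.comp (continuous_const.prodMk continuous_id)).aestronglyMeasurable)
    (Filter.Eventually.of_forall fun t ht x hx => by
      apply hC
      constructor
      · have : |x - s| < 1 := by simpa [Real.dist_eq] using hx
        constructor <;> [linarith [abs_le.mp this.le |>.1]; linarith [abs_le.mp this.le |>.2]]
      · rw [Set.uIoc_of_le (by norm_num : (0:ℝ) ≤ 1)] at ht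
        exact ⟨ht.1.le, ht.2⟩)
    (intervalIntegrable_const)
    (Filter.Eventually.of_forall fun t ht x hx => hd x t)
  exact key.2
-- continuation: per-function analysis
section Key
variable {G : ℝ × ℝ → ℝ} (hsm : ContDiff ℝ (⊤ : ℕ∞) G)

/-- first partials agree with `deriv` of slices -/
lemma deriv_slice1 (hsm : ContDiff ℝ (⊤ : ℕ∞) G) (x t : ℝ) :
    deriv (fun x => G (x, t)) x = pd (1,0) G (x, t) :=
  (hasDerivAt_slice1 hsm x t).deriv

lemma deriv_slice2 (hsm : ContDiff ℝ (⊤ : ℕ∞) G) (s y : ℝ) :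
    deriv (fun y => G (s, y)) y = pd (0,1) G (s, y) :=
  (hasDerivAt_slice2 hsm s y).deriv

/-- harmonicity in pd form -/
lemma harm_pd (hsm : ContDiff ℝ (⊤ : ℕ∞) G) (hh : ∀ s t, IsHarmonicAt G s t) (s t : ℝ) :
    pd (1,0) (pd (1,0) G) (s,t) + pd (0,1) (pd (0,1) G) (s,t) = 0 := by
  have h := hh s t
  unfold IsHarmonicAt at h
  have e1 : deriv (fun x => G (x, t)) = fun x => pd (1,0) G (x,t) :=
    funext fun x => deriv_slice1 hsm x t
  have e2 : deriv (fun y => G (s, y)) = fun y => pd (0,1) G (s,y) :=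
    funext fun y => deriv_slice2 hsm s y
  rw [e1, e2, deriv_slice1 (pd_smooth _ hsm) s t, deriv_slice2 (pd_smooth _ hsm) s t] at h
  exact h
end Key
section Key2
variable {G : ℝ × ℝ → ℝ}

lemma third_order (hsm : ContDiff ℝ (⊤ : ℕ∞) G) (hh : ∀ s t, IsHarmonicAt G s t) (p : ℝ × ℝ) :
    pd (1,0) (pd (1,0) (pd (0,1) G)) p = - pd (0,1) (pd (0,1) (pd (0,1) G)) p := by
  have e1 : pd (1,0) (pd (0,1) G) = pd (0,1) (pd (1,0) G) := funext (pd_swap hsm _ _)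
  have e2 : pd (1,0) (pd (1,0) G) = fun q => -(pd (0,1) (pd (0,1) G) q) := by
    funext q
    have := harm_pd hsm hh q.1 q.2
    have hq : ((q.1 : ℝ), (q.2 : ℝ)) = q := rfl
    rw [hq] at this
    linarith
  calc pd (1,0) (pd (1,0) (pd (0,1) G)) p
      = pd (1,0) (pd (0,1) (pd (1,0) G)) p := by rw [e1]
    _ = pd (0,1) (pd (1,0) (pd (1,0) G)) p := pd_swap (pd_smooth _ hsm) _ _ p
    _ = pd (0,1) (fun q => -(pd (0,1) (pd (0,1) G) q)) p := by rw [e2]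
    _ = - pd (0,1) (pd (0,1) (pd (0,1) G)) p := by
        simp only [pd, fderiv_fun_neg]
        simp only [ContinuousLinearMap.neg_apply, neg_inj]
        rfl

lemma pd_periodic' {F : ℝ × ℝ → ℝ} (hF : ContDiff ℝ (⊤ : ℕ∞) F)
    (hp : ∀ s t, F (s, t + 1) = F (s, t)) (v : ℝ × ℝ) :
    ∀ s t, pd v F (s, t + 1) = pd v F (s, t) :=
  fun s t => pd_periodic (hF.differentiable (by simp)) hp v s t

end Key2
section Key3
variable {G : ℝ × ℝ → ℝ}

lemma cont_slice2 {F : ℝ × ℝ → ℝ} (hF : Continuous F) (x : ℝ) :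
    Continuous (fun t => F (x, t)) := hF.comp (continuous_const.prodMk continuous_id)

lemma cont_slice1 {F : ℝ × ℝ → ℝ} (hF : Continuous F) (t : ℝ) :
    Continuous (fun x => F (x, t)) := hF.comp (continuous_id.prodMk continuous_const)

lemma ibp (hsm : ContDiff ℝ (⊤ : ℕ∞) G) (hp : ∀ s t, G (s, t + 1) = G (s, t)) (x : ℝ) :
    (∫ t in (0:ℝ)..1, pd (0,1) G (x,t) * pd (0,1) (pd (0,1) (pd (0,1) G)) (x,t))
      = - ∫ t in (0:ℝ)..1, (pd (0,1) (pd (0,1) G) (x,t))^2 := by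
  have h2 : ContDiff ℝ (⊤ : ℕ∞) (pd (0,1) G) := pd_smooth _ hsm
  have h22 : ContDiff ℝ (⊤ : ℕ∞) (pd (0,1) (pd (0,1) G)) := pd_smooth _ h2
  have h222 : ContDiff ℝ (⊤ : ℕ∞) (pd (0,1) (pd (0,1) (pd (0,1) G))) := pd_smooth _ h22
  have key := intervalIntegral.integral_mul_deriv_eq_deriv_mul
    (u := fun t => pd (0,1) G (x,t)) (u' := fun t => pd (0,1) (pd (0,1) G) (x,t))
    (v := fun t => pd (0,1) (pd (0,1) G) (x,t))
    (v' := fun t => pd (0,1) (pd (0,1) (pd (0,1) G)) (x,t))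
    (a := (0:ℝ)) (b := 1)
    (fun t _ => hasDerivAt_slice2 h2 x t)
    (fun t _ => hasDerivAt_slice2 h22 x t)
    ((cont_slice2 h22.continuous x).intervalIntegrable 0 1)
    ((cont_slice2 h222.continuous x).intervalIntegrable 0 1)
  -- periodicity kills boundary terms
  have per2 : pd (0,1) G (x, 1) = pd (0,1) G (x, 0) := by
    have := pd_periodic' hsm hp (0,1) x 0; simpa using this
  have per22 : pd (0,1) (pd (0,1) G) (x, 1) = pd (0,1) (pd (0,1) G) (x, 0) := by
    have := pd_periodic' h2 (fun s t => pd_periodic' hsm hp (0,1) s t) (0,1) x 0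
    simpa using this
  rw [key]
  rw [per2, per22]
  have : (∫ t in (0:ℝ)..1, pd (0,1) (pd (0,1) G) (x,t) * pd (0,1) (pd (0,1) G) (x,t))
      = ∫ t in (0:ℝ)..1, (pd (0,1) (pd (0,1) G) (x,t))^2 := by
    congr 1; funext t; ring
  rw [this]; ring

end Key3
section Key4
variable (G : ℝ × ℝ → ℝ)

noncomputable def gfun (x : ℝ) : ℝ := ∫ t in (0:ℝ)..1, (pd (0,1) G (x,t))^2
noncomputable def g1fun (x : ℝ) : ℝ :=
  ∫ t in (0:ℝ)..1, 2 * pd (0,1) G (x,t) * pd (1,0) (pd (0,1) G) (x,t)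
noncomputable def g2fun (x : ℝ) : ℝ :=
  ∫ t in (0:ℝ)..1, (2 * (pd (1,0) (pd (0,1) G) (x,t))^2
    + 2 * pd (0,1) G (x,t) * pd (1,0) (pd (1,0) (pd (0,1) G)) (x,t))

variable {G}

lemma g_hasDeriv (hsm : ContDiff ℝ (⊤ : ℕ∞) G) (x : ℝ) :
    HasDerivAt (gfun G) (g1fun G x) x := by
  have h2 : ContDiff ℝ (⊤ : ℕ∞) (pd (0,1) G) := pd_smooth _ hsm
  have h12 : ContDiff ℝ (⊤ : ℕ∞) (pd (1,0) (pd (0,1) G)) := pd_smooth _ h2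
  exact param_hasDerivAt (fun p => (pd (0,1) G p)^2)
    (fun p => 2 * pd (0,1) G p * pd (1,0) (pd (0,1) G) p)
    (h2.continuous.pow 2) ((continuous_const.mul h2.continuous).mul h12.continuous)
    (fun x t => by
      have h := (hasDerivAt_slice1 h2 x t).fun_pow 2
      simpa using h) x

lemma g1_hasDeriv (hsm : ContDiff ℝ (⊤ : ℕ∞) G) (x : ℝ) :
    HasDerivAt (g1fun G) (g2fun G x) x := by
  have h2 : ContDiff ℝ (⊤ : ℕ∞) (pd (0,1) G) := pd_smooth _ hsm
  have h12 : ContDiff ℝ (⊤ : ℕ∞) (pd (1,0) (pd (0,1) G)) := pd_smooth _ h2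
  have h112 : ContDiff ℝ (⊤ : ℕ∞) (pd (1,0) (pd (1,0) (pd (0,1) G))) := pd_smooth _ h12
  exact param_hasDerivAt
    (fun p => 2 * pd (0,1) G p * pd (1,0) (pd (0,1) G) p)
    (fun p => 2 * (pd (1,0) (pd (0,1) G) p)^2
      + 2 * pd (0,1) G p * pd (1,0) (pd (1,0) (pd (0,1) G)) p)
    ((continuous_const.mul h2.continuous).mul h12.continuous)
    ((continuous_const.mul (h12.continuous.pow 2)).add
      ((continuous_const.mul h2.continuous).mul h112.continuous))
    (fun x t => by
      have h := ((hasDerivAt_slice1 h2 x t).const_mul 2).fun_mul (hasDerivAt_slice1 h12 x t)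
      exact h.congr_deriv (by ring)) x

lemma g2_nonneg (hsm : ContDiff ℝ (⊤ : ℕ∞) G) (hh : ∀ s t, IsHarmonicAt G s t)
    (hp : ∀ s t, G (s, t + 1) = G (s, t)) (x : ℝ) : 0 ≤ g2fun G x := by
  have h2 : ContDiff ℝ (⊤ : ℕ∞) (pd (0,1) G) := pd_smooth _ hsm
  have h12 : ContDiff ℝ (⊤ : ℕ∞) (pd (1,0) (pd (0,1) G)) := pd_smooth _ h2
  have h112 : ContDiff ℝ (⊤ : ℕ∞) (pd (1,0) (pd (1,0) (pd (0,1) G))) := pd_smooth _ h12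
  have h22 : ContDiff ℝ (⊤ : ℕ∞) (pd (0,1) (pd (0,1) G)) := pd_smooth _ h2
  have h222 : ContDiff ℝ (⊤ : ℕ∞) (pd (0,1) (pd (0,1) (pd (0,1) G))) := pd_smooth _ h22
  have hsplit : g2fun G x = (∫ t in (0:ℝ)..1, 2 * (pd (1,0) (pd (0,1) G) (x,t))^2)
      + ∫ t in (0:ℝ)..1, 2 * pd (0,1) G (x,t) * pd (1,0) (pd (1,0) (pd (0,1) G)) (x,t) := by
    unfold g2fun
    exact intervalIntegral.integral_add
      ((cont_slice2 (continuous_const.mul (h12.continuous.pow 2)) x).intervalIntegrable 0 1)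
      ((cont_slice2 ((continuous_const.mul h2.continuous).mul h112.continuous) x).intervalIntegrable 0 1)
  have hsecond : (∫ t in (0:ℝ)..1, 2 * pd (0,1) G (x,t)
        * pd (1,0) (pd (1,0) (pd (0,1) G)) (x,t))
      = 2 * ∫ t in (0:ℝ)..1, (pd (0,1) (pd (0,1) G) (x,t))^2 := by
    have e : (fun t => 2 * pd (0,1) G (x,t) * pd (1,0) (pd (1,0) (pd (0,1) G)) (x,t))
        = fun t => (-2) * (pd (0,1) G (x,t) * pd (0,1) (pd (0,1) (pd (0,1) G)) (x,t)) := by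
      funext t
      rw [third_order hsm hh (x,t)]
      ring
    rw [e, intervalIntegral.integral_const_mul, ibp hsm hp x]
    ring
  rw [hsplit, hsecond]
  have i1 : 0 ≤ ∫ t in (0:ℝ)..1, 2 * (pd (1,0) (pd (0,1) G) (x,t))^2 :=
    intervalIntegral.integral_nonneg (by norm_num) (fun t _ => by positivity)
  have i2 : 0 ≤ ∫ t in (0:ℝ)..1, (pd (0,1) (pd (0,1) G) (x,t))^2 :=
    intervalIntegral.integral_nonneg (by norm_num) (fun t _ => by positivity)
  linarith

lemma g_convex (hsm : ContDiff ℝ (⊤ : ℕ∞) G) (hh : ∀ s t, IsHarmonicAt G s t)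
    (hp : ∀ s t, G (s, t + 1) = G (s, t)) : ConvexOn ℝ univ (gfun G) := by
  have hderiv : deriv (gfun G) = g1fun G := funext fun x => (g_hasDeriv hsm x).deriv
  apply convexOn_of_deriv2_nonneg convex_univ
  · exact fun x _ => ((g_hasDeriv hsm x).continuousAt).continuousWithinAt
  · exact fun x _ => ((g_hasDeriv hsm x).differentiableAt).differentiableWithinAt
  · rw [interior_univ, hderiv]
    exact fun x _ => ((g1_hasDeriv hsm x).differentiableAt).differentiableWithinAt
  · intro x _
    have : deriv^[2] (gfun G) x = deriv (deriv (gfun G)) x := rfl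
    rw [this, hderiv, (g1_hasDeriv hsm x).deriv]
    exact g2_nonneg hsm hh hp x

end Key4
section Key5
variable {G : ℝ × ℝ → ℝ}

lemma mean_zero (hsm : ContDiff ℝ (⊤ : ℕ∞) G)
    (hcoper : ∀ s : ℝ, (∫ t in (0:ℝ)..1, deriv (fun x => G (x, t)) s) = 0)
    {R₀ : ℝ} (hR : 0 < R₀)
    (hmean : (1 / (2 * R₀)) * ∫ s in (-R₀)..R₀, ∫ t in (0:ℝ)..1, G (s, t) = 0)
    (x : ℝ) : (∫ t in (0:ℝ)..1, G (x, t)) = 0 := by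
  have hd : ∀ y : ℝ, HasDerivAt (fun x => ∫ t in (0:ℝ)..1, G (x, t))
      (∫ t in (0:ℝ)..1, pd (1,0) G (y, t)) y :=
    fun y => param_hasDerivAt G (pd (1,0) G) hsm.continuous (pd_cont _ hsm)
      (fun x t => hasDerivAt_slice1 hsm x t) y
  have hc0 : ∀ y : ℝ, (∫ t in (0:ℝ)..1, pd (1,0) G (y, t)) = 0 := by
    intro y
    have h := hcoper y
    have e : ∀ t : ℝ, deriv (fun x => G (x, t)) y = pd (1,0) G (y, t) :=
      fun t => deriv_slice1 hsm y t
    simp only [e] at h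
    exact h
  have hconst : ∀ y z : ℝ, (∫ t in (0:ℝ)..1, G (y, t)) = ∫ t in (0:ℝ)..1, G (z, t) := by
    intro y z
    exact is_const_of_deriv_eq_zero (fun w => (hd w).differentiableAt)
      (fun w => by rw [(hd w).deriv]; exact hc0 w) y z
  set c := ∫ t in (0:ℝ)..1, G (0, t) with hc
  have hxc : ∀ y : ℝ, (∫ t in (0:ℝ)..1, G (y, t)) = c := fun y => hconst y 0
  have : (∫ s in (-R₀)..R₀, ∫ t in (0:ℝ)..1, G (s, t)) = 2 * R₀ * c := by
    simp only [hxc]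
    rw [intervalIntegral.integral_const, smul_eq_mul]
    ring
  rw [this] at hmean
  have hc0' : c = 0 := by
    have h2R : (0:ℝ) < 2 * R₀ := by positivity
    rcases mul_eq_zero.mp hmean with h1 | h2
    · exact absurd h1 (by positivity)
    · rcases mul_eq_zero.mp h2 with h3 | h4
      · exact absurd h3 (by positivity)
      · exact h4
  rw [hxc x, hc0']

lemma convex_slab {f : ℝ → ℝ} {B R₀ h x : ℝ} (hconv : ConvexOn ℝ Set.univ f)
    (hcont : Continuous f) (hnn : ∀ y, 0 ≤ f y) (h0 : 0 < h)
    (hx : |x| ≤ R₀ - h) (hI : (∫ s in (-R₀)..R₀, f s) ≤ B) : f x ≤ B / (2 * h) := by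
  have hxl : -R₀ ≤ x - h := by have := (abs_le.mp hx).1; linarith
  have hxr : x + h ≤ R₀ := by have := (abs_le.mp hx).2; linarith
  have hmid : ∀ u : ℝ, f x ≤ (f (x - u) + f (x + u)) / 2 := by
    intro u
    have h2 := hconv.2 (Set.mem_univ (x - u)) (Set.mem_univ (x + u))
      (by norm_num : (0:ℝ) ≤ 1/2) (by norm_num : (0:ℝ) ≤ 1/2) (by norm_num)
    have e : (1/2 : ℝ) • (x - u) + (1/2 : ℝ) • (x + u) = x := by
      simp only [smul_eq_mul]; ring
    rw [e] at h2
    simp only [smul_eq_mul] at h2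
    linarith
  have int1 : IntervalIntegrable (fun u => f (x - u)) volume 0 h :=
    (hcont.comp (continuous_const.sub continuous_id)).intervalIntegrable 0 h
  have int2 : IntervalIntegrable (fun u => f (x + u)) volume 0 h :=
    (hcont.comp (continuous_const.add continuous_id)).intervalIntegrable 0 h
  have l2 : (∫ u in (0:ℝ)..h, f x) ≤ ∫ u in (0:ℝ)..h, (f (x - u) + f (x + u)) / 2 := by
    apply intervalIntegral.integral_mono_on h0.le
      (intervalIntegrable_const) (((int1.add int2).div_const 2)) (fun u _ => hmid u)
  have e1 : (∫ u in (0:ℝ)..h, f x) = h * f x := by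
    rw [intervalIntegral.integral_const]; simp [smul_eq_mul]
  have e2 : (∫ u in (0:ℝ)..h, (f (x - u) + f (x + u)) / 2)
      = (1/2) * ((∫ u in (0:ℝ)..h, f (x - u)) + ∫ u in (0:ℝ)..h, f (x + u)) := by
    rw [intervalIntegral.integral_div, intervalIntegral.integral_add int1 int2]
    ring
  have e3 : (∫ u in (0:ℝ)..h, f (x - u)) = ∫ s in (x - h)..x, f s := by
    have := intervalIntegral.integral_comp_sub_left (a := (0:ℝ)) (b := h) f x
    simpa using this
  have e4 : (∫ u in (0:ℝ)..h, f (x + u)) = ∫ s in x..(x + h), f s := by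
    have := intervalIntegral.integral_comp_add_left (a := (0:ℝ)) (b := h) f x
    simpa using this
  have e5 : (∫ s in (x - h)..x, f s) + (∫ s in x..(x + h), f s)
      = ∫ s in (x - h)..(x + h), f s :=
    intervalIntegral.integral_add_adjacent_intervals
      (hcont.intervalIntegrable _ _) (hcont.intervalIntegrable _ _)
  have step1 : h * f x ≤ (1/2) * ∫ s in (x - h)..(x + h), f s := by
    rw [← e5, ← e3, ← e4, ← e2, ← e1]; exact l2
  have step2 : (∫ s in (x - h)..(x + h), f s) ≤ ∫ s in (-R₀)..R₀, f s := by
    have d1 : (∫ s in (-R₀)..(x - h), f s) + (∫ s in (x - h)..(x + h), f s)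
        = ∫ s in (-R₀)..(x + h), f s :=
      intervalIntegral.integral_add_adjacent_intervals
        (hcont.intervalIntegrable _ _) (hcont.intervalIntegrable _ _)
    have d2 : (∫ s in (-R₀)..(x + h), f s) + (∫ s in (x + h)..R₀, f s)
        = ∫ s in (-R₀)..R₀, f s :=
      intervalIntegral.integral_add_adjacent_intervals
        (hcont.intervalIntegrable _ _) (hcont.intervalIntegrable _ _)
    have n1 : 0 ≤ ∫ s in (-R₀)..(x - h), f s :=
      intervalIntegral.integral_nonneg hxl (fun u _ => hnn u)
    have n2 : 0 ≤ ∫ s in (x + h)..R₀, f s :=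
      intervalIntegral.integral_nonneg hxr (fun u _ => hnn u)
    linarith
  rw [le_div_iff₀ (by positivity : (0:ℝ) < 2 * h)]
  nlinarith [hI, step1, step2]

end Key5
section Key6
variable {G : ℝ × ℝ → ℝ}

lemma energy_ge (hsm : ContDiff ℝ (⊤ : ℕ∞) G) {R₀ B : ℝ} (hR : 0 < R₀)
    (henergy : (∫ s in (-R₀)..R₀, ∫ t in (0:ℝ)..1,
        ((deriv (fun x => G (x, t)) s) ^ 2 + (deriv (fun y => G (s, y)) t) ^ 2)) ≤ B) :
    (∫ s in (-R₀)..R₀, gfun G s) ≤ B := by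
  have h1c : ContDiff ℝ (⊤ : ℕ∞) (pd (1,0) G) := pd_smooth _ hsm
  have h2c : ContDiff ℝ (⊤ : ℕ∞) (pd (0,1) G) := pd_smooth _ hsm
  have e : ∀ s t : ℝ, (deriv (fun x => G (x, t)) s) ^ 2 + (deriv (fun y => G (s, y)) t) ^ 2
      = (pd (1,0) G (s,t))^2 + (pd (0,1) G (s,t))^2 := fun s t => by
    rw [deriv_slice1 hsm, deriv_slice2 hsm]
  simp only [e] at henergy
  have hsplit : ∀ s : ℝ, (∫ t in (0:ℝ)..1, ((pd (1,0) G (s,t))^2 + (pd (0,1) G (s,t))^2))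
      = (∫ t in (0:ℝ)..1, (pd (1,0) G (s,t))^2) + gfun G s := fun s =>
    intervalIntegral.integral_add
      ((cont_slice2 (h1c.continuous.pow 2) s).intervalIntegrable 0 1)
      ((cont_slice2 (h2c.continuous.pow 2) s).intervalIntegrable 0 1)
  simp only [hsplit] at henergy
  have he1 : ∀ x : ℝ, HasDerivAt (fun x => ∫ t in (0:ℝ)..1, (pd (1,0) G (x,t))^2)
      (∫ t in (0:ℝ)..1, 2 * pd (1,0) G (x,t) * pd (1,0) (pd (1,0) G) (x,t)) x := fun x =>
    param_hasDerivAt (fun p => (pd (1,0) G p)^2)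
      (fun p => 2 * pd (1,0) G p * pd (1,0) (pd (1,0) G) p)
      (h1c.continuous.pow 2)
      ((continuous_const.mul h1c.continuous).mul (pd_cont _ h1c))
      (fun x t => by simpa using (hasDerivAt_slice1 h1c x t).fun_pow 2) x
  have hcont_e1 : Continuous (fun x => ∫ t in (0:ℝ)..1, (pd (1,0) G (x,t))^2) :=
    Differentiable.continuous (fun x => (he1 x).differentiableAt)
  have hcont_g : Continuous (gfun G) :=
    Differentiable.continuous (fun x => (g_hasDeriv hsm x).differentiableAt)
  have hmono : (∫ s in (-R₀)..R₀, gfun G s)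
      ≤ ∫ s in (-R₀)..R₀, ((∫ t in (0:ℝ)..1, (pd (1,0) G (s,t))^2) + gfun G s) := by
    apply intervalIntegral.integral_mono_on (by linarith)
      (hcont_g.intervalIntegrable _ _)
      ((hcont_e1.add hcont_g).intervalIntegrable _ _)
    intro s _
    have : 0 ≤ ∫ t in (0:ℝ)..1, (pd (1,0) G (s,t))^2 :=
      intervalIntegral.integral_nonneg (by norm_num) (fun t _ => by positivity)
    show gfun G s ≤ (∫ t in (0:ℝ)..1, (pd (1,0) G (s,t))^2) + gfun G s
    linarith
  exact le_trans hmono henergy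

lemma integral_abs_subinterval {f : ℝ → ℝ} (hf : Continuous f) {a b c d : ℝ}
    (h1 : a ≤ c) (h2 : c ≤ d) (h3 : d ≤ b) :
    (∫ u in c..d, |f u|) ≤ ∫ u in a..b, |f u| := by
  have habs : Continuous fun u => |f u| := hf.abs
  have d1 : (∫ u in a..c, |f u|) + (∫ u in c..d, |f u|) = ∫ u in a..d, |f u| :=
    intervalIntegral.integral_add_adjacent_intervals
      (habs.intervalIntegrable _ _) (habs.intervalIntegrable _ _)
  have d2 : (∫ u in a..d, |f u|) + (∫ u in d..b, |f u|) = ∫ u in a..b, |f u| :=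
    intervalIntegral.integral_add_adjacent_intervals
      (habs.intervalIntegrable _ _) (habs.intervalIntegrable _ _)
  have n1 : 0 ≤ ∫ u in a..c, |f u| :=
    intervalIntegral.integral_nonneg h1 (fun u _ => abs_nonneg _)
  have n2 : 0 ≤ ∫ u in d..b, |f u| :=
    intervalIntegral.integral_nonneg h3 (fun u _ => abs_nonneg _)
  linarith

lemma small_pointwise (hsm : ContDiff ℝ (⊤ : ℕ∞) G)
    (hp : ∀ s t, G (s, t + 1) = G (s, t))
    (ha : ∀ x : ℝ, (∫ t in (0:ℝ)..1, G (x, t)) = 0) (s t ε : ℝ) (hε : 0 < ε) :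
    |G (s, t)| ≤ ε / 2 + gfun G s / (2 * ε) := by
  have h2c : ContDiff ℝ (⊤ : ℕ∞) (pd (0,1) G) := pd_smooth _ hsm
  set t' := Int.fract t with ht'
  have ht'0 : 0 ≤ t' := Int.fract_nonneg t
  have ht'1 : t' ≤ 1 := (Int.fract_lt_one t).le
  have hGt : G (s, t) = G (s, t') := by
    have hper : Function.Periodic (fun y => G (s, y)) 1 := fun y => hp s y
    have := hper.sub_int_mul_eq (x := t) ⌊t⌋
    simp only [mul_one] at this
    rw [ht', Int.fract]
    exact this.symm
  set I := ∫ u in (0:ℝ)..1, |pd (0,1) G (s, u)| with hI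
  have claim1 : ∀ τ ∈ Set.Icc (0:ℝ) 1, |G (s, t') - G (s, τ)| ≤ I := by
    intro τ hτ
    have ftc : (∫ u in τ..t', pd (0,1) G (s, u)) = G (s, t') - G (s, τ) :=
      intervalIntegral.integral_eq_sub_of_hasDerivAt
        (fun u _ => hasDerivAt_slice2 hsm s u)
        ((cont_slice2 h2c.continuous s).intervalIntegrable _ _)
    rw [← ftc]
    rcases le_total τ t' with hle | hle
    · calc |∫ u in τ..t', pd (0,1) G (s, u)|
          ≤ ∫ u in τ..t', |pd (0,1) G (s, u)| :=
            intervalIntegral.abs_integral_le_integral_abs hle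
        _ ≤ I := integral_abs_subinterval (cont_slice2 h2c.continuous s) hτ.1 hle ht'1
    · rw [intervalIntegral.integral_symm, abs_neg]
      calc |∫ u in t'..τ, pd (0,1) G (s, u)|
          ≤ ∫ u in t'..τ, |pd (0,1) G (s, u)| :=
            intervalIntegral.abs_integral_le_integral_abs hle
        _ ≤ I := integral_abs_subinterval (cont_slice2 h2c.continuous s) ht'0 hle hτ.2
  have hrep : G (s, t') = ∫ τ in (0:ℝ)..1, (G (s, t') - G (s, τ)) := by
    rw [intervalIntegral.integral_sub intervalIntegrable_const
      ((cont_slice2 hsm.continuous s).intervalIntegrable _ _),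
      intervalIntegral.integral_const, ha s]
    simp
  have habs1 : |G (s, t')| ≤ I := by
    rw [hrep]
    calc |∫ τ in (0:ℝ)..1, (G (s, t') - G (s, τ))|
        ≤ ∫ τ in (0:ℝ)..1, |G (s, t') - G (s, τ)| :=
          intervalIntegral.abs_integral_le_integral_abs (by norm_num)
      _ ≤ ∫ τ in (0:ℝ)..1, I := by
          apply intervalIntegral.integral_mono_on (by norm_num)
            ((continuous_const.sub (cont_slice2 hsm.continuous s)).abs.intervalIntegrable _ _)
            intervalIntegrable_const claim1
      _ = I := by rw [intervalIntegral.integral_const]; simp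
  have hIbound : I ≤ ε / 2 + gfun G s / (2 * ε) := by
    have hmono : I ≤ ∫ u in (0:ℝ)..1, (ε / 2 + (pd (0,1) G (s, u))^2 / (2 * ε)) := by
      apply intervalIntegral.integral_mono_on (by norm_num)
        ((cont_slice2 h2c.continuous s).abs.intervalIntegrable _ _)
        (((continuous_const.add (((cont_slice2 h2c.continuous s).pow 2).div_const (2*ε)))).intervalIntegrable _ _)
      intro u _
      have h1 : 0 ≤ (|pd (0,1) G (s, u)| - ε)^2 := sq_nonneg _
      have h2 : |pd (0,1) G (s, u)|^2 = (pd (0,1) G (s, u))^2 := sq_abs _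
      show |pd (0,1) G (s, u)| ≤ ε / 2 + (pd (0,1) G (s, u))^2 / (2 * ε)
      rw [div_add_div _ _ (by norm_num : (2:ℝ) ≠ 0) (by positivity : 2 * ε ≠ 0), le_div_iff₀ (by positivity)]
      nlinarith [abs_nonneg (pd (0,1) G (s, u))]
    have hsplit : (∫ u in (0:ℝ)..1, (ε / 2 + (pd (0,1) G (s, u))^2 / (2 * ε)))
        = ε / 2 + gfun G s / (2 * ε) := by
      rw [intervalIntegral.integral_add intervalIntegrable_const
        ((((cont_slice2 h2c.continuous s).fun_pow 2).div_const (2*ε)).intervalIntegrable _ _),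
        intervalIntegral.integral_const, intervalIntegral.integral_div]
      unfold gfun
      simp
    rw [← hsplit]
    exact hmono
  rw [hGt]
  exact le_trans habs1 hIbound

end Key6
/-- If `R_n → ∞` and `Γ_n : [-R_n,R_n] × S¹ → ℝ` are harmonic with vanishing
mean value, uniformly bounded Dirichlet energy and zero co-period, then for
every `ε > 0` there is `h > 0` such that whenever `R_n > h`,
`sup_{[-R_n+h,R_n−h]×S¹} |Γ_n| < ε`. -/
theorem harmonic_uniform_smallness
    (R : ℕ → ℝ) (Γ : ℕ → ℝ × ℝ → ℝ) (B : ℝ)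
    (hR : Tendsto R atTop atTop)
    (hRpos : ∀ n, 0 < R n)
    (hsmooth : ∀ n, ContDiff ℝ (⊤ : ℕ∞) (Γ n))
    (hper : ∀ n s t, Γ n (s, t + 1) = Γ n (s, t))
    (hharm : ∀ n s t, IsHarmonicAt (Γ n) s t)
    (hmean : ∀ n, (1 / (2 * R n)) *
      ∫ s in (-(R n))..(R n), ∫ t in (0:ℝ)..1, Γ n (s, t) = 0)
    (henergy : ∀ n, (∫ s in (-(R n))..(R n), ∫ t in (0:ℝ)..1,
        ((deriv (fun x => Γ n (x, t)) s) ^ 2 +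
         (deriv (fun y => Γ n (s, y)) t) ^ 2)) ≤ B)
    (hcoper : ∀ n (s : ℝ), (∫ t in (0:ℝ)..1, deriv (fun x => Γ n (x, t)) s) = 0) :
    ∀ ε : ℝ, 0 < ε → ∃ h : ℝ, 0 < h ∧
      ∀ n, R n > h → ∀ s t : ℝ, |s| ≤ R n - h → |Γ n (s, t)| < ε := by
  intro ε hε
  -- B is nonnegative
  have hB : 0 ≤ B := by
    refine le_trans ?_ (henergy 0)
    apply intervalIntegral.integral_nonneg (by linarith [hRpos 0])
    intro s _
    apply intervalIntegral.integral_nonneg (by norm_num)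
    intro t _
    positivity
  refine ⟨(B + 1) / ε ^ 2, by positivity, ?_⟩
  intro n hn s t hst
  have hsm := hsmooth n
  set h : ℝ := (B + 1) / ε ^ 2 with hh
  have h0 : 0 < h := by positivity
  -- mean value of each slice vanishes
  have ha : ∀ x : ℝ, (∫ τ in (0:ℝ)..1, Γ n (x, τ)) = 0 :=
    mean_zero hsm (hcoper n) (hRpos n) (hmean n)
  -- convexity and energy bound give smallness of the g function
  have hgnn : ∀ y : ℝ, 0 ≤ gfun (Γ n) y := fun y =>
    intervalIntegral.integral_nonneg (by norm_num) (fun τ _ => by positivity)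
  have hgcont : Continuous (gfun (Γ n)) :=
    Differentiable.continuous (fun x => (g_hasDeriv hsm x).differentiableAt)
  have hgs : gfun (Γ n) s ≤ B / (2 * h) :=
    convex_slab (g_convex hsm (hharm n) (hper n)) hgcont hgnn h0 hst
      (energy_ge hsm (hRpos n) (henergy n))
  have hsmall : gfun (Γ n) s ≤ ε ^ 2 / 2 := by
    have : B / (2 * h) ≤ ε ^ 2 / 2 := by
      rw [hh]
      rw [div_le_div_iff₀ (by positivity) (by norm_num)]
      have : 2 * ((B + 1) / ε ^ 2) * (ε ^ 2) = 2 * (B + 1) := by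
        field_simp
      nlinarith [sq_nonneg ε]
    linarith
  have hpt := small_pointwise hsm (hper n) ha s t ε hε
  have : gfun (Γ n) s / (2 * ε) ≤ ε / 4 := by
    rw [div_le_iff₀ (by positivity)]
    nlinarith
  calc |Γ n (s, t)| ≤ ε / 2 + gfun (Γ n) s / (2 * ε) := hpt
    _ ≤ ε / 2 + ε / 4 := by linarith
    _ < ε := by linarith
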